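/- arXiv:1910.12276 — 7 statements merged into one kernel-verified Lean document; each statement's English description precedes it below -/
import Mathlib

section
/- Let k be a number field, f ∈ k[t] a nonconstant squarefree polynomial whose degree is odd or divisible by 6, and E the elliptic curve over k(t) given by Y² = X³ + f(t). Given a point (X₀(t), Y₀(t)) ∈ E(k(t)), there exists a finite set S of places of k containing the archimedean places such that for every t ∈ k and every choice y_t of a square root of f(t), the fractional O_{k(y_t),S}-ideal generated by y_t − Y₀(t) is the cube of a fractional O_{k(y_t),S}-ideal. -/
open IsDedekindDomain NumberField Polynomial

/-!
Write `Y₀ = C / B³` and `X₀ = A / B²` with `C² = A³ + f B⁶` and `C` coprime to `B`; since `f` is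
squarefree, `A`, `C`, `f` then generate the unit ideal. For `Γ = B(t)³ y - C(t)` and
`Γ' = B(t)³ y + C(t)` we have `Γ Γ' = -A(t)³` and `y - Y₀(t) = Γ / B(t)³`, so `v(Γ)` is a cube as
soon as `v(Γ) = v(Γ')` or the larger of the two is a cube. Take `S` to be the primes at which some
coefficient involved, or `2`, is not a unit. If `t` is integral at `q`, the Bézout identities forbid
`Γ` and `Γ'` to lie both in `q`, so the larger valuation is `1`. If `t` has a pole at `q`, the
valuations of `B(t)`, `C(t)`, `f(t)` are powers of `v(t)` given by the degrees, and
`v(Γ) ≠ v(Γ')` forces `v(B(t)³ y) = v(C(t))`, i.e. `deg f = 2 deg C - 6 deg B`; as `deg f` is odd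
or divisible by `6`, `3 ∣ deg C`, and the larger valuation `v(C(t)) = v(t) ^ deg C` is a cube.
-/

section PowThree

variable {G : Type*} [CommGroupWithZero G]

theorem exists_eq_pow_three_of_sq_eq_pow_three {x w : G} (hx : x ≠ 0) (h : x ^ 2 = w ^ 3) :
    ∃ u, x = u ^ 3 :=
  ⟨x / w, by rw [div_pow, ← h, pow_succ x 2, mul_div_cancel_left₀ _ (pow_ne_zero 2 hx)]⟩

theorem exists_eq_pow_three_of_mul_eq_pow_three {x y w u : G} (hu : u ≠ 0) (h : x * y = w ^ 3)
    (hy : y = u ^ 3) : ∃ s, x = s ^ 3 :=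
  ⟨w / u, by rw [div_pow, ← h, hy, mul_div_cancel_right₀ _ (pow_ne_zero 3 hu)]⟩

theorem exists_eq_pow_three_of_mul_eq_pow_three_of_max {Γ₀ : Type*}
    [LinearOrderedCommGroupWithZero Γ₀] {x y w : Γ₀} (hx : x ≠ 0) (h : x * y = w ^ 3)
    (hxy : x = y ∨ ∃ u, max x y = u ^ 3) : ∃ s, x = s ^ 3 := by
  obtain rfl | ⟨u, hu⟩ := hxy
  · exact exists_eq_pow_three_of_sq_eq_pow_three hx (by rw [sq, h])
  rcases max_choice x y with hmax | hmax
  · exact ⟨u, hmax ▸ hu⟩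
  · have hu0 : u ≠ 0 := by
      rintro rfl
      exact hx (le_zero_iff.1 (by simpa [hu] using le_max_left x y))
    exact exists_eq_pow_three_of_mul_eq_pow_three hu0 h (hmax ▸ hu)

end PowThree

namespace Valuation

variable {R Γ₀ : Type*} [CommRing R] [LinearOrderedCommGroupWithZero Γ₀] (v : Valuation R Γ₀)

theorem map_eval_le_one {p : R[X]} (hp : ∀ i, v (p.coeff i) ≤ 1) {z : R} (hz : v z ≤ 1) :
    v (p.eval z) ≤ 1 := by
  rw [eval_eq_sum]
  exact v.map_sum_le fun i _ => by
    rw [map_mul, map_pow]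
    exact mul_le_one' (hp i) (pow_le_one' hz i)

theorem map_eval_eq_pow_natDegree {p : R[X]} (hp : ∀ i, v (p.coeff i) ≤ 1)
    (hlc : v p.leadingCoeff = 1) {z : R} (hz : 1 < v z) :
    v (p.eval z) = v z ^ p.natDegree := by
  have hlead : v (p.coeff p.natDegree * z ^ p.natDegree) = v z ^ p.natDegree := by
    rw [map_mul, map_pow, coeff_natDegree, hlc, one_mul]
  have hlower : v (∑ i ∈ Finset.range p.natDegree, p.coeff i * z ^ i) < v z ^ p.natDegree :=
    v.map_sum_lt (pow_ne_zero _ (zero_lt_one.trans hz).ne') fun i hi => by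
      rw [map_mul, map_pow]
      calc v (p.coeff i) * v z ^ i ≤ v z ^ i := mul_le_of_le_one_left' (hp i)
        _ < v z ^ p.natDegree := pow_lt_pow_right₀ hz (Finset.mem_range.1 hi)
  rw [eval_eq_sum_range, Finset.sum_range_succ, v.map_add_eq_of_lt_right (hlead ▸ hlower),
    hlead]

theorem coeff_map_le_one {k : Type*} [Semiring k] {ι : k →+* R} {p : k[X]}
    (hp : ∀ x ∈ p.coeffs, v (ι x) = 1) (i : ℕ) : v ((p.map ι).coeff i) ≤ 1 := by
  rw [coeff_map]
  by_cases hi : p.coeff i = 0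
  · simp [hi]
  · exact (hp _ (coeff_mem_coeffs hi)).le

theorem map_eval_le_one_of_coeffs {k : Type*} [Semiring k] {ι : k →+* R} {p : k[X]}
    (hp : ∀ x ∈ p.coeffs, v (ι x) = 1) {t : k} (ht : v (ι t) ≤ 1) : v (ι (p.eval t)) ≤ 1 := by
  rw [← eval_map_apply]
  exact v.map_eval_le_one (v.coeff_map_le_one hp) ht

theorem map_eval_eq_pow_natDegree_of_coeffs [Nontrivial R] {k : Type*} [DivisionRing k]
    {ι : k →+* R} {p : k[X]} (hp0 : p ≠ 0) (hp : ∀ x ∈ p.coeffs, v (ι x) = 1) {t : k}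
    (ht : 1 < v (ι t)) : v (ι (p.eval t)) = v (ι t) ^ p.natDegree := by
  rw [← eval_map_apply, ← natDegree_map ι]
  refine v.map_eval_eq_pow_natDegree (v.coeff_map_le_one hp) ?_ ht
  rw [leadingCoeff_map]
  exact hp _ (coeff_mem_coeffs (leadingCoeff_ne_zero.2 hp0))

variable {v}

theorem max_map_sub_map_add_eq_one (h2 : v 2 = 1) {a b c y σ τ P Q S : R}
    (hb : v b ≤ 1) (hc : v c ≤ 1) (hy : v y ≤ 1) (hσ : v σ ≤ 1) (hτ : v τ ≤ 1)
    (hP : v P ≤ 1) (hQ : v Q ≤ 1) (hS : v S ≤ 1)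
    (hcurve : c ^ 2 = a ^ 3 + y ^ 2 * b ^ 6) (hbc : σ * c + τ * b = 1)
    (hacy : P * a + Q * c + S * y ^ 2 = 1) :
    max (v (b ^ 3 * y - c)) (v (b ^ 3 * y + c)) = 1 := by
  have hby : v (b ^ 3 * y) ≤ 1 := by
    rw [map_mul, map_pow]; exact mul_le_one' (pow_le_one' hb 3) hy
  refine le_antisymm (max_le (v.map_sub_le hby hc) (v.map_add_le hby hc))
    (not_lt.1 fun hlt => ?_)
  obtain ⟨hsub, hadd⟩ := max_lt_iff.1 hlt
  have hc' : v c < 1 := by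
    have h := v.map_sub_lt hadd hsub
    rwa [show b ^ 3 * y + c - (b ^ 3 * y - c) = 2 * c by ring, map_mul, h2, one_mul] at h
  have hby' : v (b ^ 3 * y) < 1 := by
    have h := v.map_add_lt hadd hsub
    rwa [show b ^ 3 * y + c + (b ^ 3 * y - c) = 2 * (b ^ 3 * y) by ring, map_mul, h2,
      one_mul] at h
  have hmul_lt : ∀ {x g}, v x ≤ 1 → v g < 1 → v (x * g) < 1 := fun hx hg => by
    rw [map_mul]; exact Right.mul_lt_one_of_le_of_lt hx hg
  rcases lt_or_eq_of_le hb with hb' | hb'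
  · have h := v.map_add_lt (hmul_lt hσ hc') (hmul_lt hτ hb')
    rw [hbc, map_one] at h
    exact lt_irrefl _ h
  have hy' : v y < 1 := by
    rw [map_mul, map_pow, hb', one_pow, one_mul] at hby'
    exact hby'
  have hy2 : v (y ^ 2) < 1 := by rw [map_pow]; exact pow_lt_one₀ zero_le hy' two_ne_zero
  have ha : v a < 1 := by
    have h : v (a ^ 3) < 1 := by
      rw [show a ^ 3 = c ^ 2 - y ^ 2 * b ^ 6 by rw [hcurve]; ring]
      have hb6 : v (b ^ 6) ≤ 1 := by rw [map_pow]; exact pow_le_one' hb 6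
      refine v.map_sub_lt ?_ (by rw [mul_comm]; exact hmul_lt hb6 hy2)
      rw [map_pow]; exact pow_lt_one₀ zero_le hc' two_ne_zero
    rw [map_pow] at h
    exact (pow_lt_one_iff_of_nonneg zero_le three_ne_zero).1 h
  have h := v.map_add_lt (v.map_add_lt (hmul_lt hP ha) (hmul_lt hQ hc')) (hmul_lt hS hy2)
  rw [hacy, map_one] at h
  exact lt_irrefl _ h

theorem map_sub_eq_map_add_or_exists_max_eq_pow_three (h2 : v 2 = 1) {z b c y : R} {m n d : ℕ}
    (hz : 1 < v z) (hb : v b = v z ^ m) (hc : v c = v z ^ n) (hy : v y ^ 2 = v z ^ d)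
    (hd : Odd d ∨ 6 ∣ d) :
    v (b ^ 3 * y - c) = v (b ^ 3 * y + c) ∨
      ∃ u, max (v (b ^ 3 * y - c)) (v (b ^ 3 * y + c)) = u ^ 3 := by
  by_cases hbc : v (b ^ 3 * y) = v c
  · right
    have hdeg : 6 * m + d = 2 * n := by
      have h := congrArg (· ^ 2) hbc
      simp only [map_mul, map_pow, mul_pow, hb, hc, hy, ← pow_mul, ← pow_add] at h
      have := pow_right_injective₀ (zero_lt_one.trans hz) hz.ne' h
      omega
    obtain ⟨n', rfl⟩ : 3 ∣ n := by rcases hd with ⟨d', rfl⟩ | ⟨d', rfl⟩ <;> omega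
    have hc' : v c = (v z ^ n') ^ 3 := by rw [hc, ← pow_mul, mul_comm]
    refine ⟨v z ^ n', le_antisymm ?_ ?_⟩
    · rw [← hc']
      exact max_le ((v.map_sub _ _).trans (by rw [hbc, max_self]))
        ((v.map_add _ _).trans (by rw [hbc, max_self]))
    · rw [← hc', max_comm]
      calc v c = v (b ^ 3 * y + c - (b ^ 3 * y - c)) := by
            rw [show b ^ 3 * y + c - (b ^ 3 * y - c) = 2 * c by ring, map_mul, h2, one_mul]
        _ ≤ _ := v.map_sub _ _
  · left
    rw [sub_eq_add_neg, v.map_add_of_distinct_val (by rwa [map_neg]), map_neg,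
      v.map_add_of_distinct_val hbc]

end Valuation

theorem exists_eq_sq_and_eq_pow_three_of_pow_three_eq_sq {R : Type*} [CommRing R] [IsDomain R]
    [IsIntegrallyClosed R] {p q : R} (h : p ^ 3 = q ^ 2) : ∃ b, p = b ^ 2 ∧ q = b ^ 3 := by
  rcases eq_or_ne p 0 with rfl | hp
  · exact ⟨0, by simp, by simpa using h.symm⟩
  let K := FractionRing R
  have hp' : algebraMap R K p ≠ 0 := (IsFractionRing.injective R K).ne_iff' (map_zero _) |>.2 hp
  set β : K := algebraMap R K q / algebraMap R K p
  have hβ : β ^ 2 = algebraMap R K p := by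
    rw [div_pow, div_eq_iff (pow_ne_zero 2 hp'), ← map_pow, ← h, map_pow]
    ring
  have hint : IsIntegral R β :=
    ⟨X ^ 2 - Polynomial.C p, monic_X_pow_sub_C p two_ne_zero, by simp [hβ]⟩
  obtain ⟨b, hb⟩ := IsIntegrallyClosed.isIntegral_iff.1 hint
  refine ⟨b, IsFractionRing.injective R K ?_, IsFractionRing.injective R K ?_⟩
  · rw [map_pow, hb, hβ]
  · rw [map_pow, hb, pow_succ, hβ, mul_div_cancel₀ _ hp']

theorem RatFunc.denom_pow_three_eq_denom_sq {K : Type*} [Field K] {X₀ Y₀ : RatFunc K} {f : K[X]}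
    (h : Y₀ ^ 2 = X₀ ^ 3 + algebraMap K[X] (RatFunc K) f) : X₀.denom ^ 3 = Y₀.denom ^ 2 := by
  have hX := RatFunc.algebraMap_ne_zero X₀.denom_ne_zero
  have hY := RatFunc.algebraMap_ne_zero Y₀.denom_ne_zero
  have hcleared : Y₀.num ^ 2 * X₀.denom ^ 3
      = X₀.num ^ 3 * Y₀.denom ^ 2 + f * X₀.denom ^ 3 * Y₀.denom ^ 2 := by
    apply RatFunc.algebraMap_injective K
    rw [← X₀.num_div_denom, ← Y₀.num_div_denom] at h
    field_simp at h
    simp only [map_add, map_mul, map_pow]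
    linear_combination h
  refine eq_of_monic_of_associated (X₀.monic_denom.pow 3) (Y₀.monic_denom.pow 2)
    (associated_of_dvd_dvd ?_ ?_)
  · exact (X₀.isCoprime_num_denom.symm.pow (m := 3) (n := 3)).dvd_of_dvd_mul_right
      ⟨Y₀.num ^ 2 - f * Y₀.denom ^ 2, by linear_combination -hcleared⟩
  · exact (Y₀.isCoprime_num_denom.symm.pow (m := 2) (n := 2)).dvd_of_dvd_mul_right
      ⟨X₀.num ^ 3 + f * X₀.denom ^ 3, by linear_combination hcleared⟩

theorem RatFunc.exists_denom_eq_pow_three {K : Type*} [Field K] {X₀ Y₀ : RatFunc K} {f : K[X]}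
    (h : Y₀ ^ 2 = X₀ ^ 3 + algebraMap K[X] (RatFunc K) f) :
    ∃ A B : K[X], Y₀.denom = B ^ 3 ∧ Y₀.num ^ 2 = A ^ 3 + f * B ^ 6 := by
  obtain ⟨B, hX, hY⟩ := exists_eq_sq_and_eq_pow_three_of_pow_three_eq_sq
    (RatFunc.denom_pow_three_eq_denom_sq h)
  refine ⟨X₀.num, B, hY, RatFunc.algebraMap_injective K ?_⟩
  have hB : algebraMap K[X] (RatFunc K) B ≠ 0 := by
    refine RatFunc.algebraMap_ne_zero fun hB0 => X₀.denom_ne_zero ?_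
    rw [hX, hB0, zero_pow two_ne_zero]
  rw [← X₀.num_div_denom, ← Y₀.num_div_denom, hX, hY] at h
  simp only [map_add, map_mul, map_pow] at h ⊢
  field_simp at h
  linear_combination h

theorem exists_mul_add_mul_add_mul_eq_one {R : Type*} [CommRing R] [IsDomain R]
    [IsPrincipalIdealRing R] [GCDMonoid R] {A B C f : R} (hcurve : C ^ 2 = A ^ 3 + f * B ^ 6)
    (hCB : IsCoprime C B) (hf : Squarefree f) : ∃ P Q S, P * A + Q * C + S * f = 1 := by
  have hcop : IsCoprime (gcd A C) f := by
    refine isCoprime_of_irreducible_dvd (fun h => hf.ne_zero h.2) fun π hπ hπAC hπf => ?_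
    have hπA := hπAC.trans (gcd_dvd_left A C)
    have hπC := hπAC.trans (gcd_dvd_right A C)
    have hπB : ¬π ∣ B := fun hπB => hπ.not_isUnit (hCB.isUnit_of_dvd' hπC hπB)
    have hπ2 : π ^ 2 ∣ f * B ^ 6 := by
      rw [show f * B ^ 6 = C ^ 2 - A ^ 3 by rw [hcurve]; ring]
      exact dvd_sub (pow_dvd_pow_of_dvd hπC 2)
        ((pow_dvd_pow π (by norm_num)).trans (pow_dvd_pow_of_dvd hπA 3))
    have hπ2f := (hπ.coprime_iff_not_dvd.2 hπB).pow.dvd_of_dvd_mul_right hπ2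
    exact hπ.not_isUnit (hf π (by rwa [sq] at hπ2f))
  obtain ⟨x, y, hxy⟩ := exists_gcd_eq_mul_add_mul A C
  obtain ⟨u, w, huw⟩ := hcop
  exact ⟨u * x, u * y, w, by rw [← huw, hxy]; ring⟩

theorem IsDedekindDomain.HeightOneSpectrum.finite_setOf_valuation_ne_one {R K : Type*}
    [CommRing R] [IsDedekindDomain R] [Field K] [Algebra R K] [IsFractionRing R K] {x : K}
    (hx : x ≠ 0) : {v : HeightOneSpectrum R | v.valuation K x ≠ 1}.Finite := by
  refine ((Support.finite R x).union (Support.finite R x⁻¹)).subset fun v hv => ?_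
  rcases lt_or_gt_of_ne hv with h | h
  · right
    show 1 < v.valuation K x⁻¹
    rwa [map_inv₀, one_lt_inv₀ (zero_lt_iff.2 ((Valuation.ne_zero_iff _).2 hx))]
  · exact Or.inl h

theorem NumberField.exists_finset_valuation_algebraMap_eq_one {k : Type*} [Field k]
    [NumberField k] {U : Set k} (hU : U.Finite) (h0 : 0 ∉ U) :
    ∃ S : Finset (HeightOneSpectrum (𝓞 k)), ∀ (L : Type) [Field L] [NumberField L] [Algebra k L]
      (q : HeightOneSpectrum (𝓞 L)), q.under (𝓞 k) ∉ S →
        ∀ x ∈ U, q.valuation L (algebraMap k L x) = 1 := by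
  have hfin : (⋃ x ∈ U, {p : HeightOneSpectrum (𝓞 k) | p.valuation k x ≠ 1}).Finite :=
    hU.biUnion fun x hx =>
      HeightOneSpectrum.finite_setOf_valuation_ne_one (ne_of_mem_of_not_mem hx h0)
  refine ⟨hfin.toFinset, fun L _ _ _ q hq x hx => ?_⟩
  have : q.asIdeal.LiesOver (q.under (𝓞 k)).asIdeal := ⟨rfl⟩
  have hpx : (q.under (𝓞 k)).valuation k x = 1 := by
    by_contra h
    exact hq (hfin.mem_toFinset.2 (Set.mem_biUnion hx h))
  rw [← HeightOneSpectrum.valuation_liesOver L (q.under (𝓞 k)) q, hpx, one_pow]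

theorem WithZero.exists_three_dvd_of_eq_pow_three {x u : WithZero (Multiplicative ℤ)}
    (hx : x ≠ 0) (h : x = u ^ 3) :
    ∃ n : ℤ, 3 ∣ n ∧
      x = ((Multiplicative.ofAdd n : Multiplicative ℤ) : WithZero (Multiplicative ℤ)) := by
  have hu : u ≠ 0 := by
    rintro rfl
    exact hx (by simpa using h)
  obtain ⟨a, rfl⟩ := WithZero.ne_zero_iff_exists.1 hu
  exact ⟨3 * a.toAdd, dvd_mul_right _ _, by rw [h, ← WithZero.coe_pow]; rfl⟩

theorem exists_valuation_sub_div_eq_pow_three {k L Γ₀ : Type*} [Field k] [Field L]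
    [LinearOrderedCommGroupWithZero Γ₀] {v : Valuation L Γ₀} {ι : k →+* L}
    {A B C f σ τ P Q S : k[X]}
    (hcoeffs : ∀ p ∈ [A, B, C, f, σ, τ, P, Q, S], ∀ x ∈ p.coeffs, v (ι x) = 1) (h2 : v 2 = 1)
    (hB : B ≠ 0) (hf : f ≠ 0) (hdeg : Odd f.natDegree ∨ 6 ∣ f.natDegree)
    (hcurve : C ^ 2 = A ^ 3 + f * B ^ 6) (hBC : σ * C + τ * B = 1)
    (hACf : P * A + Q * C + S * f = 1) {t : k} (hBt : B.eval t ≠ 0) {y : L}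
    (hy : y ^ 2 = ι (f.eval t)) (hne : y - ι (C.eval t) / ι (B.eval t) ^ 3 ≠ 0) :
    ∃ u, v (y - ι (C.eval t) / ι (B.eval t) ^ 3) = u ^ 3 := by
  have hev : ∀ {p q : k[X]}, p = q → ι (p.eval t) = ι (q.eval t) := fun h => h ▸ rfl
  have hcurve_t := hev hcurve
  have hBC_t := hev hBC
  have hACf_t := hev hACf
  simp only [eval_add, eval_mul, eval_pow, eval_one, map_add, map_mul, map_pow, map_one]
    at hcurve_t hBC_t hACf_t
  set a := ι (A.eval t)
  set b := ι (B.eval t)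
  set c := ι (C.eval t)
  have hb : b ≠ 0 := (map_ne_zero ι).2 hBt
  have hsplit : y - c / b ^ 3 = (b ^ 3 * y - c) / b ^ 3 := by field_simp
  have hΓ : b ^ 3 * y - c ≠ 0 := fun h => hne (by rw [hsplit, h, zero_div])
  obtain ⟨u, hu⟩ : ∃ u, v (b ^ 3 * y - c) = u ^ 3 := by
    refine exists_eq_pow_three_of_mul_eq_pow_three_of_max ((v.ne_zero_iff).2 hΓ)
      (y := v (b ^ 3 * y + c)) (w := v a) ?_ ?_
    · have hprod : (b ^ 3 * y - c) * (b ^ 3 * y + c) = -a ^ 3 := by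
        linear_combination b ^ 6 * hy - hcurve_t
      rw [← map_mul, hprod, Valuation.map_neg, map_pow]
    rcases le_or_gt (v (ι t)) 1 with ht | ht
    · have hle : ∀ p ∈ [A, B, C, f, σ, τ, P, Q, S], v (ι (p.eval t)) ≤ 1 :=
        fun p hp => v.map_eval_le_one_of_coeffs (hcoeffs p hp) ht
      have hyle : v y ≤ 1 := by
        by_contra! h1
        have : 1 < v (y ^ 2) := by rw [map_pow]; exact one_lt_pow₀ h1 two_ne_zero
        exact (hy ▸ this).not_ge (hle f (by simp))
      refine Or.inr ⟨1, ?_⟩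
      rw [one_pow]
      exact Valuation.max_map_sub_map_add_eq_one h2 (hle B (by simp)) (hle C (by simp)) hyle
        (hle σ (by simp)) (hle τ (by simp)) (hle P (by simp)) (hle Q (by simp)) (hle S (by simp))
        (by rw [hy]; exact hcurve_t) hBC_t (by rw [hy]; exact hACf_t)
    · rcases eq_or_ne C 0 with rfl | hC
      · left
        simp [c]
      have heq : ∀ p ∈ [A, B, C, f, σ, τ, P, Q, S], p ≠ 0 →
          v (ι (p.eval t)) = v (ι t) ^ p.natDegree :=
        fun p hp hp0 => v.map_eval_eq_pow_natDegree_of_coeffs hp0 (hcoeffs p hp) ht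
      exact Valuation.map_sub_eq_map_add_or_exists_max_eq_pow_three h2 ht
        (heq B (by simp) hB) (heq C (by simp) hC) (by rw [← map_pow, hy, heq f (by simp) hf]) hdeg
  exact ⟨u / v b, by rw [hsplit, map_div₀, map_pow, hu, div_pow]⟩

theorem stmt0_general (k : Type*) [Field k] [NumberField k]
    (f : Polynomial k) (hsf : Squarefree f)
    (hdeg : Odd f.natDegree ∨ 6 ∣ f.natDegree)
    (X₀ Y₀ : RatFunc k)
    (hpt : Y₀ ^ 2 = X₀ ^ 3 + algebraMap (Polynomial k) (RatFunc k) f) :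
    ∃ S : Finset (HeightOneSpectrum (𝓞 k)),
      ∀ t : k, Y₀.denom.eval t ≠ 0 →
      ∀ (L : Type) [Field L] [NumberField L] [Algebra k L],
      ∀ y : L, y ^ 2 = algebraMap k L (f.eval t) →
        Algebra.adjoin k {y} = ⊤ →
      ∀ q : HeightOneSpectrum (𝓞 L),
        (∀ p ∈ S, Ideal.comap (algebraMap (𝓞 k) (𝓞 L)) q.asIdeal ≠ p.asIdeal) →
        (y - algebraMap k L (Y₀.eval (RingHom.id k) t) = 0 ∨
          ∃ n : ℤ, 3 ∣ n ∧
            q.valuation L (y - algebraMap k L (Y₀.eval (RingHom.id k) t))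
              = ((Multiplicative.ofAdd n : Multiplicative ℤ) : WithZero (Multiplicative ℤ))) := by
  classical
  obtain ⟨A, B, hden, hcurve⟩ := RatFunc.exists_denom_eq_pow_three hpt
  have hB : B ≠ 0 := by
    rintro rfl
    exact Y₀.denom_ne_zero (by rw [hden, zero_pow three_ne_zero])
  have hCB : IsCoprime Y₀.num B :=
    Y₀.isCoprime_num_denom.of_isCoprime_of_dvd_right (hden ▸ dvd_pow_self B three_ne_zero)
  obtain ⟨P, Q, S, hACf⟩ := exists_mul_add_mul_add_mul_eq_one hcurve hCB hsf
  obtain ⟨σ, τ, hBC⟩ := hCB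
  set polys := [A, B, Y₀.num, f, σ, τ, P, Q, S]
  obtain ⟨T, hT⟩ := NumberField.exists_finset_valuation_algebraMap_eq_one
    (U := insert 2 (⋃ p ∈ polys, (p.coeffs : Set k)))
    ((polys.finite_toSet.biUnion fun p _ => p.coeffs.finite_toSet).insert 2) (by
      simp only [Set.mem_insert_iff, Set.mem_iUnion, Finset.mem_coe, mem_coeffs_iff, not_or,
        not_exists]
      exact ⟨two_ne_zero.symm, fun p _ n ⟨hn, h0⟩ => mem_support_iff.1 hn h0.symm⟩)
  refine ⟨T, fun t ht L _ _ _ y hy _ q hq => ?_⟩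
  have hunit := hT L q (fun h => hq _ h rfl)
  have hBt : B.eval t ≠ 0 := fun h0 => ht (by rw [hden, eval_pow, h0, zero_pow three_ne_zero])
  have hYt : algebraMap k L (Y₀.eval (RingHom.id k) t)
      = algebraMap k L (Y₀.num.eval t) / algebraMap k L (B.eval t) ^ 3 := by
    rw [RatFunc.eval, hden, ← eval, ← eval, map_div₀, eval_pow, map_pow]
  rw [hYt]
  by_cases hne : y - algebraMap k L (Y₀.num.eval t) / algebraMap k L (B.eval t) ^ 3 = 0
  · exact Or.inl hne
  obtain ⟨u, hu⟩ := exists_valuation_sub_div_eq_pow_three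
    (fun p hp x hx => hunit x (Set.mem_insert_of_mem _ (Set.mem_biUnion hp hx)))
    (by rw [← map_ofNat (algebraMap k L) 2]; exact hunit 2 (Set.mem_insert _ _))
    hB hsf.ne_zero hdeg hcurve hBC hACf hBt hy hne
  exact Or.inr (WithZero.exists_three_dvd_of_eq_pow_three ((Valuation.ne_zero_iff _).2 hne) hu)

theorem stmt0 (k : Type*) [Field k] [NumberField k]
    (f : Polynomial k) (hf : 0 < f.natDegree) (hsf : Squarefree f)
    (hdeg : Odd f.natDegree ∨ 6 ∣ f.natDegree)
    (X₀ Y₀ : RatFunc k)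
    (hpt : Y₀ ^ 2 = X₀ ^ 3 + algebraMap (Polynomial k) (RatFunc k) f) :
    ∃ S : Finset (HeightOneSpectrum (𝓞 k)),
      ∀ t : k, Y₀.denom.eval t ≠ 0 →
      ∀ (L : Type) [Field L] [NumberField L] [Algebra k L],
      ∀ y : L, y ^ 2 = algebraMap k L (f.eval t) →
        Algebra.adjoin k {y} = ⊤ →
      ∀ q : HeightOneSpectrum (𝓞 L),
        (∀ p ∈ S, Ideal.comap (algebraMap (𝓞 k) (𝓞 L)) q.asIdeal ≠ p.asIdeal) →
        (y - algebraMap k L (Y₀.eval (RingHom.id k) t) = 0 ∨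
          ∃ n : ℤ, 3 ∣ n ∧
            q.valuation L (y - algebraMap k L (Y₀.eval (RingHom.id k) t))
              = ((Multiplicative.ofAdd n : Multiplicative ℤ) : WithZero (Multiplicative ℤ))) :=
  stmt0_general k f hsf hdeg X₀ Y₀ hpt
end

section
/- Let 𝔭 be a discrete valuation on a field K with ord_𝔭(2) = 0, and let x, y, f ∈ K with y² = x³ + f. If 3 divides min(ord_𝔭(f), 3·ord_𝔭(x)), then for any square root z of f in an extension field L with valuation ord extending ord_𝔭 (with values in (1/2)ℤ or ℤ), 3 divides ord(z − y) + ord(z + y), and in fact 3 divides 2·min(ord(z), ord(y)) whenever min(ord(z−y), ord(z+y)) = min(ord(z), ord(y)). -/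
/-!
Since `(z - y)(z + y) = z² - y² = -x³`, the orders of `z - y` and `z + y` add up to `3 ord x`.
Moreover `2 min (ord z, ord y) = min (ord f, ord y²)`, and in the relation `y² = x³ + f` the
smallest order is attained twice, so this equals `min (ord f, 3 ord x)`, a multiple of `3`.
-/

section MulOrd

variable {R Γ : Type*} [Ring R] [Nontrivial R]
  [AddCommGroup Γ] [LinearOrder Γ] [IsOrderedAddMonoid Γ] {ord : R → Γ}

theorem ord_one_of_mul (hmul : ∀ u v : R, u ≠ 0 → v ≠ 0 → ord (u * v) = ord u + ord v) :
    ord 1 = 0 := by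
  simpa using (hmul 1 1 one_ne_zero one_ne_zero).symm

theorem ord_neg_of_mul (hmul : ∀ u v : R, u ≠ 0 → v ≠ 0 → ord (u * v) = ord u + ord v)
    {u : R} (hu : u ≠ 0) : ord (-u) = ord u := by
  have hneg_one : ord (-1 : R) + ord (-1) = 0 := by
    rw [← hmul _ _ (neg_ne_zero.2 one_ne_zero) (neg_ne_zero.2 one_ne_zero), neg_one_mul, neg_neg,
      ord_one_of_mul hmul]
  have hord_neg_one : ord (-1 : R) = 0 := by grind
  rw [← neg_one_mul, hmul _ _ (neg_ne_zero.2 one_ne_zero) hu, hord_neg_one, zero_add]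

theorem ord_pow_of_mul [NoZeroDivisors R]
    (hmul : ∀ u v : R, u ≠ 0 → v ≠ 0 → ord (u * v) = ord u + ord v)
    {u : R} (hu : u ≠ 0) (n : ℕ) : ord (u ^ n) = n • ord u := by
  induction n with
  | zero => simpa using ord_one_of_mul hmul
  | succ n ih => rw [pow_succ, hmul _ _ (pow_ne_zero n hu) hu, ih, succ_nsmul]

/-- The ultrametric "isosceles" property: in `u = v + w` the smallest order is attained twice. -/
theorem min_ord_eq_of_eq_add (hmul : ∀ u v : R, u ≠ 0 → v ≠ 0 → ord (u * v) = ord u + ord v)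
    (hadd : ∀ u v : R, u ≠ 0 → v ≠ 0 → u + v ≠ 0 → min (ord u) (ord v) ≤ ord (u + v))
    {u v w : R} (hu : u ≠ 0) (hv : v ≠ 0) (hw : w ≠ 0) (huvw : u = v + w) :
    min (ord w) (ord u) = min (ord w) (ord v) := by
  have hu_ge : min (ord v) (ord w) ≤ ord u := huvw ▸ hadd v w hv hw (huvw ▸ hu)
  have hv_ge : min (ord u) (ord w) ≤ ord v := by
    have hv_eq : u + -w = v := by rw [huvw, add_neg_cancel_right]
    have := hadd u (-w) hu (neg_ne_zero.2 hw) (hv_eq ▸ hv)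
    rwa [hv_eq, ord_neg_of_mul hmul hw] at this
  grind

end MulOrd

theorem stmt2_general {K L : Type*} [Field K] [Field L] (i : K →+* L)
    (ordK : K → ℤ) (ordL : L → ℚ)
    (hKmul : ∀ x y : K, x ≠ 0 → y ≠ 0 → ordK (x * y) = ordK x + ordK y)
    (hKadd : ∀ x y : K, x ≠ 0 → y ≠ 0 → x + y ≠ 0 → min (ordK x) (ordK y) ≤ ordK (x + y))
    (hLmul : ∀ x y : L, x ≠ 0 → y ≠ 0 → ordL (x * y) = ordL x + ordL y)
    (hext : ∀ a : K, a ≠ 0 → ordL (i a) = (ordK a : ℚ))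
    (x y f : K) (hx : x ≠ 0) (hy : y ≠ 0) (hf : f ≠ 0)
    (hE : y ^ 2 = x ^ 3 + f)
    (hdvd : (3 : ℤ) ∣ min (ordK f) (3 * ordK x))
    (z : L) (hz : z ^ 2 = i f) (hz1 : z ≠ i y) (hz2 : z ≠ -(i y)) :
    (∃ n : ℤ, ordL (z - i y) + ordL (z + i y) = 3 * (n : ℚ)) ∧
    (min (ordL (z - i y)) (ordL (z + i y)) = min (ordL z) (ordL (i y)) →
      ∃ n : ℤ, 2 * min (ordL z) (ordL (i y)) = 3 * (n : ℚ)) := by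
  have hx3 : ordK (x ^ 3) = 3 * ordK x := by simpa using ord_pow_of_mul hKmul hx 3
  constructor
  · have hprod : (z - i y) * (z + i y) = i (-x ^ 3) := by
      have hE' := congrArg i hE
      simp only [map_pow, map_add] at hE'
      rw [map_neg, map_pow]
      linear_combination hz - hE'
    have hzp : z + i y ≠ 0 := fun h => hz2 (eq_neg_of_add_eq_zero_left h)
    refine ⟨ordK x, ?_⟩
    rw [← hLmul _ _ (sub_ne_zero.2 hz1) hzp, hprod, hext _ (neg_ne_zero.2 (pow_ne_zero 3 hx)),
      ord_neg_of_mul hKmul (pow_ne_zero 3 hx), hx3]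
    push_cast
    ring
  · intro _
    obtain ⟨n, hn⟩ := hdvd
    refine ⟨n, ?_⟩
    have hz0 : z ≠ 0 := by
      rintro rfl
      exact hf (i.injective (by simpa using hz.symm))
    have hzf : 2 * ordL z = ordK f := by
      simpa [hz, hext f hf] using (ord_pow_of_mul hLmul hz0 2).symm
    have hyy : 2 * ordL (i y) = (ordK (y ^ 2) : ℚ) := by
      simp [hext y hy, ord_pow_of_mul hKmul hy 2]
    have hmin := min_ord_eq_of_eq_add hKmul hKadd (pow_ne_zero 2 hy) (pow_ne_zero 3 hx) hf hE
    calc 2 * min (ordL z) (ordL (i y))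
        = ((min (ordK f) (ordK (y ^ 2)) : ℤ) : ℚ) := by
          rw [mul_min_of_nonneg _ _ zero_le_two, hzf, hyy, Int.cast_min]
      _ = 3 * n := by rw [hmin, hx3, hn]; push_cast; ring

theorem stmt2 {K L : Type*} [Field K] [Field L] (i : K →+* L)
    (ordK : K → ℤ) (ordL : L → ℚ)
    (hKmul : ∀ x y : K, x ≠ 0 → y ≠ 0 → ordK (x * y) = ordK x + ordK y)
    (hKadd : ∀ x y : K, x ≠ 0 → y ≠ 0 → x + y ≠ 0 → min (ordK x) (ordK y) ≤ ordK (x + y))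
    (hLmul : ∀ x y : L, x ≠ 0 → y ≠ 0 → ordL (x * y) = ordL x + ordL y)
    (hLadd : ∀ x y : L, x ≠ 0 → y ≠ 0 → x + y ≠ 0 → min (ordL x) (ordL y) ≤ ordL (x + y))
    (hhalf : ∀ z : L, z ≠ 0 → ∃ n : ℤ, ordL z = (n : ℚ) / 2)
    (hext : ∀ a : K, a ≠ 0 → ordL (i a) = (ordK a : ℚ))
    (h2 : ordK 2 = 0)
    (x y f : K) (hx : x ≠ 0) (hy : y ≠ 0) (hf : f ≠ 0)
    (hE : y ^ 2 = x ^ 3 + f)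
    (hdvd : (3 : ℤ) ∣ min (ordK f) (3 * ordK x))
    (z : L) (hz : z ^ 2 = i f) (hz1 : z ≠ i y) (hz2 : z ≠ -(i y)) :
    (∃ n : ℤ, ordL (z - i y) + ordL (z + i y) = 3 * (n : ℚ)) ∧
    (min (ordL (z - i y)) (ordL (z + i y)) = min (ordL z) (ordL (i y)) →
      ∃ n : ℤ, 2 * min (ordL z) (ordL (i y)) = 3 * (n : ℚ)) :=
  stmt2_general i ordK ordL hKmul hKadd hLmul hext x y f hx hy hf hE hdvd z hz hz1 hz2
end

section
/- Let a, b, d, f be polynomials over a field with b² = a³ + f·d⁶, and suppose deg f is odd and not divisible by 3, with a, b, d, f nonzero. Then deg(a³) = deg(b²) > deg(f·d⁶); in particular 3·deg a = 2·deg b > deg f + 6·deg d. -/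
open Polynomial

/- Writing `f d⁶ = b² - a³`: the degree `deg f + 6 deg d` is odd (so differs from `deg b²`) and
not divisible by `3` (so differs from `deg a³`). A difference of two polynomials of distinct degrees
has the larger of the two degrees, so `deg a³ = deg b²`, and then `f d⁶` has strictly smaller
degree. -/

theorem Polynomial.natDegree_eq_and_lt_of_eq_add {R : Type*} [Ring R] {p q r : R[X]}
    (h : p = q + r) (hrp : r.natDegree ≠ p.natDegree) (hrq : r.natDegree ≠ q.natDegree) :
    q.natDegree = p.natDegree ∧ r.natDegree < p.natDegree := by
  have hr : r = p - q := by rw [h]; abel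
  have hqp : q.natDegree = p.natDegree := by
    rcases lt_trichotomy q.natDegree p.natDegree with hlt | heq | hgt
    · exact absurd (hr ▸ natDegree_sub_eq_left_of_natDegree_lt hlt) hrp
    · exact heq
    · exact absurd (hr ▸ natDegree_sub_eq_right_of_natDegree_lt hgt) hrq
  refine ⟨hqp, lt_of_le_of_ne ?_ hrp⟩
  calc r.natDegree ≤ max p.natDegree q.natDegree := hr ▸ natDegree_sub_le p q
    _ = p.natDegree := by rw [hqp, max_self]

theorem stmt5_general {F : Type*} [Field F] (a b d f : Polynomial F)
    (hd : d ≠ 0)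
    (heq : b ^ 2 = a ^ 3 + f * d ^ 6)
    (hodd : Odd f.natDegree) (h3 : ¬ (3 ∣ f.natDegree)) :
    (a ^ 3).natDegree = (b ^ 2).natDegree ∧
    (f * d ^ 6).natDegree < (b ^ 2).natDegree ∧
    3 * a.natDegree = 2 * b.natDegree ∧
    f.natDegree + 6 * d.natDegree < 2 * b.natDegree := by
  have hf : f ≠ 0 := by
    rintro rfl
    simp at hodd
  have hfd : (f * d ^ 6).natDegree = f.natDegree + 6 * d.natDegree := by
    rw [natDegree_mul hf (pow_ne_zero 6 hd), natDegree_pow]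
  obtain ⟨hab, hlt⟩ := natDegree_eq_and_lt_of_eq_add heq
    (by rw [hfd, natDegree_pow]; rcases hodd with ⟨k, hk⟩; omega)
    (by rw [hfd, natDegree_pow]; omega)
  refine ⟨hab, hlt, ?_, ?_⟩
  · simpa only [natDegree_pow] using hab
  · simpa only [hfd, natDegree_pow] using hlt

theorem stmt5 {F : Type*} [Field F] (a b d f : Polynomial F)
    (ha : a ≠ 0) (hb : b ≠ 0) (hd : d ≠ 0) (hf : f ≠ 0)
    (heq : b ^ 2 = a ^ 3 + f * d ^ 6)
    (hodd : Odd f.natDegree) (h3 : ¬ (3 ∣ f.natDegree)) :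
    (a ^ 3).natDegree = (b ^ 2).natDegree ∧
    (f * d ^ 6).natDegree < (b ^ 2).natDegree ∧
    3 * a.natDegree = 2 * b.natDegree ∧
    f.natDegree + 6 * d.natDegree < 2 * b.natDegree :=
  stmt5_general a b d f hd heq hodd h3
end

section
/- Let k be a number field, f ∈ k[t] a nonconstant polynomial, E: Y² = X³ + f(t) over k(t), and (X₀(t), Y₀(t)) ∈ E(k(t)). Let 𝔭 be a prime of O_k not above 2, and suppose there exists t_𝔭 ∈ k with 3 | ord_𝔭(f(t_𝔭)). Then there exists ε > 0 such that for all t ∈ k with |t − t_𝔭|_𝔭 < ε and any square root y_t of f(t), every prime 𝔮 of k(y_t) above 𝔭 satisfies 3 | ord_𝔮(y_t − Y₀(t)). -/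
open IsDedekindDomain NumberField Polynomial

open IsDedekindDomain NumberField Polynomial Multiplicative

-- continuity lemma
lemma aux_cont {K : Type*} [Field K] (v : Valuation K (WithZero (Multiplicative ℤ)))
    (f : Polynomial K) (tp : K) (h0 : v (f.eval tp) ≠ 0) :
    ∃ γ : WithZero (Multiplicative ℤ), γ ≠ 0 ∧
      ∀ t : K, v (t - tp) < γ → v (f.eval t) = v (f.eval tp) := by
  set P : Polynomial K := f.comp (X + C tp) with hP
  set Q : Polynomial K := P.divX with hQ
  set F : K := f.eval tp with hF
  have hPeval : ∀ h : K, P.eval h = Q.eval h * h + F := by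
    intro h
    conv_lhs => rw [← P.divX_mul_X_add]
    simp only [hF, hP, hQ, coeff_zero_eq_eval_zero, eval_comp, eval_add, eval_mul, eval_X,
      eval_C, zero_add]
  have hC : ∀ h : K, v h ≤ 1 → v (Q.eval h) ≤
      ((Finset.range (Q.natDegree + 1)).sup fun i => v (Q.coeff i)) ⊔ 1 := by
    intro h hh
    rw [Polynomial.eval_eq_sum_range]
    refine v.map_sum_le fun i hi => ?_
    rw [v.map_mul, v.map_pow]
    calc v (Q.coeff i) * v h ^ i ≤ v (Q.coeff i) * 1 := by
          exact mul_le_mul_right (pow_le_one' hh i) _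
      _ = v (Q.coeff i) := mul_one _
      _ ≤ _ := le_sup_of_le_left (Finset.le_sup (f := fun i => v (Q.coeff i)) hi)
  set Cb : WithZero (Multiplicative ℤ) :=
    ((Finset.range (Q.natDegree + 1)).sup fun i => v (Q.coeff i)) ⊔ 1 with hCbdef
  have hC0 : Cb ≠ 0 := by
    intro h
    have : (1 : WithZero (Multiplicative ℤ)) ≤ Cb := hCbdef ▸ le_sup_right
    rw [h] at this
    simp at this
  refine ⟨min 1 (v F / Cb), ?_, ?_⟩
  · simp only [ne_eq, min_eq_iff, not_or]
    constructor <;> rintro ⟨h1, -⟩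
    · exact one_ne_zero h1
    · exact (div_ne_zero h0 hC0) h1
  · intro t ht
    rcases eq_or_ne t tp with rfl | htne
    · rfl
    have hft : f.eval t = P.eval (t - tp) := by
      simp [hP, eval_comp, sub_add_cancel]
    have hh1 : v (t - tp) < 1 := lt_of_lt_of_le ht (min_le_left _ _)
    have hh2 : v (t - tp) < v F / Cb := lt_of_lt_of_le ht (min_le_right _ _)
    have hsmall : v (Q.eval (t - tp) * (t - tp)) < v F := by
      rw [v.map_mul]
      calc v (Q.eval (t - tp)) * v (t - tp) ≤ Cb * v (t - tp) :=
            mul_le_mul_left (hC _ hh1.le) _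
        _ < Cb * (v F / Cb) := by
            exact mul_lt_mul_of_pos_left hh2 (zero_lt_iff.mpr hC0)
        _ = v F := by
            field_simp
    rw [hft, hPeval, hF, add_comm]
    exact v.map_add_eq_of_lt_left hsmall
section Helpers
open IsDedekindDomain IsDedekindDomain.HeightOneSpectrum NumberField Polynomial Multiplicative

variable {R K S L : Type*} [CommRing R] [IsDedekindDomain R] [Field K] [Algebra R K]
  [IsFractionRing R K] [CommRing S] [IsDedekindDomain S] [Field L] [Algebra S L]
  [IsFractionRing S L] [Algebra R S] [Algebra K L] [Algebra R L]
  [IsScalarTower R K L] [IsScalarTower R S L]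

lemma aux_le_one (p : HeightOneSpectrum R) (q : HeightOneSpectrum S)
    (hc : Ideal.comap (algebraMap R S) q.asIdeal = p.asIdeal)
    (x : K) (hx : p.valuation K x ≤ 1) : q.valuation L (algebraMap K L x) ≤ 1 := by
  rcases eq_or_ne x 0 with rfl | hx0
  · simp
  obtain ⟨a, b, hb, rfl⟩ := IsFractionRing.div_surjective (A := R) x
  have hbK : algebraMap R K b ≠ 0 :=
    map_ne_zero_of_mem_nonZeroDivisors _ (IsFractionRing.injective R K) hb
  have ha0 : a ≠ 0 := by
    rintro rfl; simp at hx0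
  have hb0 : b ≠ 0 := nonZeroDivisors.ne_zero hb
  -- valuation of b
  have hvb0 : p.intValuation b ≠ 0 := p.intValuation_ne_zero b hb0
  obtain ⟨mb, hmb⟩ := WithZero.ne_zero_iff_exists.mp hvb0
  have hvb1 : p.intValuation b ≤ 1 := p.intValuation_le_one b
  set n : ℕ := (-(Multiplicative.toAdd mb)).toNat with hn
  have hmbn : mb = Multiplicative.ofAdd (-(n : ℤ)) := by
    have h1 : (mb : WithZero (Multiplicative ℤ)) ≤ 1 := hmb.symm ▸ hvb1
    rw [← WithZero.coe_one, WithZero.coe_le_coe] at h1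
    have h2 : Multiplicative.toAdd mb ≤ 0 := h1
    have : (-(n:ℤ)) = Multiplicative.toAdd mb := by omega
    rw [this, ofAdd_toAdd]
  have hvb : p.intValuation b = Multiplicative.ofAdd (-(n : ℤ)) := by
    rw [← hmb, hmbn]
  -- divisibility facts
  have hbdvd : p.asIdeal ^ n ∣ Ideal.span {b} := by
    rw [← p.intValuation_le_pow_iff_dvd]
    exact le_of_eq hvb
  have hbnotdvd : ¬ p.asIdeal ^ (n + 1) ∣ Ideal.span {b} := by
    rw [← p.intValuation_le_pow_iff_dvd, hvb, WithZero.exp, WithZero.coe_le_coe]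
    simp only [Multiplicative.ofAdd_le]
    push_cast
    omega
  have hadvd : p.asIdeal ^ n ∣ Ideal.span {a} := by
    rw [← p.intValuation_le_pow_iff_dvd]
    have hxle : p.intValuation a ≤ p.intValuation b := by
      have h := hx
      rw [Valuation.map_div, valuation_of_algebraMap, valuation_of_algebraMap] at h
      exact (div_le_one₀ (lt_of_le_of_ne zero_le' (Ne.symm hvb0))).mp h
    exact hxle.trans (le_of_eq hvb)
  obtain ⟨I, hI⟩ := hbdvd
  have hInotle : ¬ I ≤ p.asIdeal := by
    intro hle
    refine hbnotdvd ?_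
    rw [hI, pow_succ]
    exact mul_dvd_mul_left _ (Ideal.dvd_iff_le.mpr hle)
  obtain ⟨s, hsI, hsp⟩ := SetLike.not_le_iff_exists.mp hInotle
  have hdvd : Ideal.span {b} ∣ Ideal.span {a * s} := by
    rw [← Ideal.span_singleton_mul_span_singleton, hI]
    exact mul_dvd_mul hadvd (Ideal.dvd_span_singleton.mpr hsI)
  obtain ⟨c, hc2⟩ := Ideal.mem_span_singleton.mp (Ideal.dvd_span_singleton.mp hdvd)
  -- x * s = c in K
  have hkey : (algebraMap R K a / algebraMap R K b) * algebraMap R K s = algebraMap R K c := by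
    field_simp
    rw [← map_mul, ← map_mul, hc2, mul_comm]
  -- push to L
  have hkeyL : algebraMap K L (algebraMap R K a / algebraMap R K b) *
      algebraMap K L (algebraMap R K s) = algebraMap K L (algebraMap R K c) := by
    rw [← map_mul, hkey]
  have htower : ∀ r : R, algebraMap K L (algebraMap R K r) = algebraMap S L (algebraMap R S r) := by
    intro r
    rw [← IsScalarTower.algebraMap_apply, ← IsScalarTower.algebraMap_apply]
  have hvs : q.valuation L (algebraMap S L (algebraMap R S s)) = 1 := by
    refine le_antisymm (q.valuation_le_one _) ?_
    by_contra hlt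
    push_neg at hlt
    have := (q.valuation_lt_one_iff_dvd (algebraMap R S s)).mp hlt
    rw [Ideal.dvd_span_singleton] at this
    refine hsp ?_
    rw [← hc]
    exact Ideal.mem_comap.mpr this
  have := congrArg (q.valuation L) hkeyL
  simp only [Valuation.map_mul] at this
  rw [htower s, htower c, hvs, mul_one] at this
  rw [this]
  exact q.valuation_le_one (algebraMap R S c)

lemma aux_eq_one (p : HeightOneSpectrum R) (q : HeightOneSpectrum S)
    (hc : Ideal.comap (algebraMap R S) q.asIdeal = p.asIdeal)
    (x : K) (hx : p.valuation K x = 1) : q.valuation L (algebraMap K L x) = 1 := by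
  have hx0 : x ≠ 0 := by
    intro h; rw [h] at hx; simp at hx
  have h1 := aux_le_one (L := L) p q hc x hx.le
  have h2 := aux_le_one (L := L) p q hc x⁻¹ (by rw [map_inv₀, hx]; norm_num)
  rw [map_inv₀, map_inv₀] at h2
  have hq0 : q.valuation L (algebraMap K L x) ≠ 0 := by
    simp [hx0]
  rw [inv_le_one₀] at h2
  · exact le_antisymm h1 h2
  · exact lt_of_le_of_ne zero_le' (Ne.symm hq0)

lemma aux_exists_e (p : HeightOneSpectrum R) (q : HeightOneSpectrum S)
    (hc : Ideal.comap (algebraMap R S) q.asIdeal = p.asIdeal)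
    (x : K) (m : ℤ)
    (hx : p.valuation K x = (Multiplicative.ofAdd m : Multiplicative ℤ)) :
    ∃ e : ℤ, q.valuation L (algebraMap K L x) =
      (Multiplicative.ofAdd (e * m) : Multiplicative ℤ) := by
  have hx0 : x ≠ 0 := by
    intro h; rw [h] at hx; simp at hx
  obtain ⟨π, hπ⟩ := valuation_exists_uniformizer K p
  have hπ0 : π ≠ 0 := by
    intro h; rw [h, map_zero] at hπ; exact WithZero.exp_ne_zero hπ.symm
  have hπL : algebraMap K L π ≠ 0 := by
    simp [hπ0]
  obtain ⟨ε', hε'⟩ := WithZero.ne_zero_iff_exists.mp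
    ((Valuation.ne_zero_iff _).mpr hπL : q.valuation L (algebraMap K L π) ≠ 0)
  set ε : ℤ := Multiplicative.toAdd ε' with hε
  -- u = x * π ^ m has valuation 1
  have hπm : p.valuation K (π ^ m) = (Multiplicative.ofAdd (-m) : Multiplicative ℤ) := by
    rw [map_zpow₀, hπ, WithZero.exp, ← WithZero.coe_zpow]
    congr 1
    rw [← ofAdd_zsmul]
    congr 1
    simp
  have hu : p.valuation K (x * π ^ m) = 1 := by
    rw [Valuation.map_mul, hx, hπm, ← WithZero.coe_mul, ← ofAdd_add]
    simp
  have huL := aux_eq_one (L := L) p q hc _ hu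
  rw [map_mul, map_zpow₀, Valuation.map_mul, map_zpow₀, ← hε'] at huL
  refine ⟨-ε, ?_⟩
  have hεz : ((ε' : WithZero (Multiplicative ℤ)) ^ m : WithZero (Multiplicative ℤ))
      = ((Multiplicative.ofAdd (m * ε) : Multiplicative ℤ) : WithZero (Multiplicative ℤ)) := by
    rw [← WithZero.coe_zpow]
    rw [hε, ← ofAdd_toAdd ε', ← ofAdd_zsmul, smul_eq_mul, ofAdd_toAdd]
  -- from huL : v(x) * ε'^m = 1
  rw [hεz] at huL
  have : q.valuation L (algebraMap K L x) =
      (((Multiplicative.ofAdd (m * ε) : Multiplicative ℤ) : WithZero (Multiplicative ℤ)))⁻¹ :=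
    eq_inv_of_mul_eq_one_left huL
  rw [this, ← WithZero.coe_inv, ← ofAdd_neg]
  congr 2
  ring
end Helpers
open Polynomial

lemma aux_eval {K : Type*} [Field K] (f : Polynomial K) (X₀ Y₀ : RatFunc K)
    (hpt : Y₀ ^ 2 = X₀ ^ 3 + algebraMap (Polynomial K) (RatFunc K) f)
    (t : K) (hd : Y₀.denom.eval t ≠ 0) :
    X₀.denom.eval t ≠ 0 ∧
    (Y₀.eval (RingHom.id K) t) ^ 2 = (X₀.eval (RingHom.id K) t) ^ 3 + f.eval t := by
  set a := X₀.num
  set c := X₀.denom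
  set b := Y₀.num
  set d := Y₀.denom
  have hcne : algebraMap (Polynomial K) (RatFunc K) c ≠ 0 :=
    RatFunc.algebraMap_ne_zero (RatFunc.denom_ne_zero X₀)
  have hdne : algebraMap (Polynomial K) (RatFunc K) d ≠ 0 :=
    RatFunc.algebraMap_ne_zero (RatFunc.denom_ne_zero Y₀)
  have h1 : (algebraMap (Polynomial K) (RatFunc K) b / algebraMap _ _ d) ^ 2
      = (algebraMap (Polynomial K) (RatFunc K) a / algebraMap _ _ c) ^ 3
        + algebraMap _ _ f := by
    rw [RatFunc.num_div_denom, RatFunc.num_div_denom]; exact hpt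
  have hkey : algebraMap (Polynomial K) (RatFunc K) (b ^ 2 * c ^ 3)
      = algebraMap (Polynomial K) (RatFunc K) (a ^ 3 * d ^ 2 + f * (c ^ 3 * d ^ 2)) := by
    field_simp at h1
    push_cast [map_add, map_mul, map_pow]
    linear_combination h1
  have hpoly : b ^ 2 * c ^ 3 = a ^ 3 * d ^ 2 + f * (c ^ 3 * d ^ 2) :=
    IsFractionRing.injective (Polynomial K) (RatFunc K) hkey
  have heval : (b.eval t) ^ 2 * (c.eval t) ^ 3
      = (a.eval t) ^ 3 * (d.eval t) ^ 2 + f.eval t * ((c.eval t) ^ 3 * (d.eval t) ^ 2) := by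
    have := congrArg (Polynomial.eval t) hpoly
    simpa using this
  have hc : c.eval t ≠ 0 := by
    intro h0
    rw [h0] at heval
    have ha : a.eval t = 0 := by
      have : (a.eval t) ^ 3 * (d.eval t) ^ 2 = 0 := by
        linear_combination -heval
      rcases mul_eq_zero.mp this with h | h
      · exact pow_eq_zero_iff (by norm_num) |>.mp h
      · exact absurd (pow_eq_zero_iff (by norm_num) |>.mp h) hd
    obtain ⟨u, v, huv⟩ := RatFunc.isCoprime_num_denom X₀
    have := congrArg (Polynomial.eval t) huv
    simp only [eval_add, eval_mul, eval_one] at this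
    rw [show eval t X₀.num = 0 from ha, show eval t X₀.denom = 0 from h0] at this
    simp at this
  have hXe : X₀.eval (RingHom.id K) t = a.eval t / c.eval t := rfl
  have hYe : Y₀.eval (RingHom.id K) t = b.eval t / d.eval t := rfl
  refine ⟨hc, ?_⟩
  rw [hXe, hYe]
  field_simp
  linear_combination heval

/- Theorem 3.2 (avoid): `k` a number field, `f ∈ k[t]` nonconstant, `(X₀, Y₀) ∈ E(k(t))` a
point of `E : Y² = X³ + f(t)`, and `𝔭` a prime of `O_k` not above `2` such that
`3 ∣ ord_𝔭 (f (t_𝔭))` for some `t_𝔭 ∈ k`.  Then for `t` sufficiently `𝔭`-adically close to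
`t_𝔭` (the condition `|t - t_𝔭|_𝔭 < ε` is expressed multiplicatively: the `𝔭`-adic valuation
of `t - t_𝔭` is below some nonzero threshold `γ`), every prime `𝔮` of `L = k(y_t)` above `𝔭`
satisfies `3 ∣ ord_𝔮 (y_t - Y₀(t))`. -/
theorem stmt7 (k : Type*) [Field k] [NumberField k]
    (f : Polynomial k) (hf : 0 < f.natDegree)
    (X₀ Y₀ : RatFunc k)
    (hpt : Y₀ ^ 2 = X₀ ^ 3 + algebraMap (Polynomial k) (RatFunc k) f)
    (p : HeightOneSpectrum (𝓞 k)) (hp2 : (2 : 𝓞 k) ∉ p.asIdeal)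
    (tp : k)
    (htp : ∃ n : ℤ, 3 ∣ n ∧ p.valuation k (f.eval tp)
      = ((Multiplicative.ofAdd n : Multiplicative ℤ) : WithZero (Multiplicative ℤ))) :
    ∃ γ : WithZero (Multiplicative ℤ), γ ≠ 0 ∧
      ∀ t : k, p.valuation k (t - tp) < γ → Y₀.denom.eval t ≠ 0 →
      ∀ (L : Type) [Field L] [NumberField L] [Algebra k L],
      ∀ y : L, y ^ 2 = algebraMap k L (f.eval t) →
        Algebra.adjoin k {y} = ⊤ →
      ∀ q : HeightOneSpectrum (𝓞 L),
        Ideal.comap (algebraMap (𝓞 k) (𝓞 L)) q.asIdeal = p.asIdeal →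
        (y - algebraMap k L (Y₀.eval (RingHom.id k) t) = 0 ∨
          ∃ n : ℤ, 3 ∣ n ∧
            q.valuation L (y - algebraMap k L (Y₀.eval (RingHom.id k) t))
              = ((Multiplicative.ofAdd n : Multiplicative ℤ) : WithZero (Multiplicative ℤ))) := by
  obtain ⟨n, hn3, hvn⟩ := htp
  have h0 : p.valuation k (f.eval tp) ≠ 0 := by rw [hvn]; exact WithZero.coe_ne_zero
  obtain ⟨γ, hγ0, hγ⟩ := aux_cont (p.valuation k) f tp h0
  refine ⟨γ, hγ0, ?_⟩
  intro t ht hdenom L _ _ _ y hy hadj q hq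
  have hvt : p.valuation k (f.eval t)
      = ((Multiplicative.ofAdd n : Multiplicative ℤ) : WithZero (Multiplicative ℤ)) := by
    rw [hγ t ht, hvn]
  have hft0 : f.eval t ≠ 0 := by
    intro h; rw [h] at hvt; simp at hvt
  obtain ⟨hcne, hcurve⟩ := aux_eval f X₀ Y₀ hpt t hdenom
  set Yt : k := Y₀.eval (RingHom.id k) t with hYt
  set Xt : k := X₀.eval (RingHom.id k) t with hXt
  set Y : L := algebraMap k L Yt with hYdef
  set X : L := algebraMap k L Xt with hXdef
  by_cases hw0 : y - Y = 0
  · exact Or.inl hw0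
  refine Or.inr ?_
  -- helper: extract exponents
  have getExp : ∀ u : L, u ≠ 0 → ∃ α : ℤ, q.valuation L u
      = ((Multiplicative.ofAdd α : Multiplicative ℤ) : WithZero (Multiplicative ℤ)) := by
    intro u hu
    have hne : q.valuation L u ≠ (0 : WithZero (Multiplicative ℤ)) :=
      (Valuation.ne_zero_iff _).mpr hu
    obtain ⟨a, ha⟩ := WithZero.ne_zero_iff_exists.mp hne
    exact ⟨Multiplicative.toAdd a, by rw [← ha, ofAdd_toAdd]⟩
  have coeInj : ∀ x z : ℤ, ((Multiplicative.ofAdd x : Multiplicative ℤ) : WithZero (Multiplicative ℤ))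
      = ((Multiplicative.ofAdd z : Multiplicative ℤ) : WithZero (Multiplicative ℤ)) → x = z :=
    fun x z h => Multiplicative.ofAdd.injective (WithZero.coe_inj.mp h)
  -- valuation of f.eval t in L
  obtain ⟨e, he⟩ := aux_exists_e (L := L) p q hq (f.eval t) n hvt
  have hy0 : y ≠ 0 := by
    intro h
    have hz : algebraMap k L (f.eval t) = 0 := by rw [← hy, h]; ring
    exact hft0 ((_root_.map_eq_zero (algebraMap k L)).mp hz)
  obtain ⟨s, hvys⟩ := getExp y hy0
  have h2s : s + s = e * n := by
    apply coeInj
    rw [ofAdd_add, WithZero.coe_mul, ← hvys, ← sq, ← map_pow, hy, he]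
  have hs3 : 3 ∣ s := by
    have h3en : (3 : ℤ) ∣ e * n := hn3.mul_left e
    omega
  -- valuation of 2
  have h2mem : (2 : 𝓞 L) ∉ q.asIdeal := by
    intro hmem
    refine hp2 ?_
    rw [← hq]
    refine Ideal.mem_comap.mpr ?_
    rwa [map_ofNat]
  have h2L : q.valuation L (2 : L) = 1 := by
    have h2e : (2 : L) = algebraMap (𝓞 L) L (2 : 𝓞 L) := by rw [map_ofNat]
    rw [h2e]
    refine le_antisymm (q.valuation_le_one _) ?_
    by_contra hlt
    push_neg at hlt
    exact h2mem (Ideal.dvd_span_singleton.mp ((q.valuation_lt_one_iff_dvd _).mp hlt))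
  -- the key identity
  have hYsq : Y ^ 2 = X ^ 3 + algebraMap k L (f.eval t) := by
    rw [hYdef, hXdef, ← map_pow, ← map_pow, ← map_add, hcurve]
  have hid : (y - Y) * (y + Y) = -(X ^ 3) := by
    linear_combination hy - hYsq
  by_cases hz0 : y + Y = 0
  · have hwy : y - Y = 2 * y := by linear_combination -hz0
    refine ⟨s, hs3, ?_⟩
    rw [hwy, Valuation.map_mul, h2L, one_mul, hvys]
  · have hXne : X ≠ 0 := by
      intro h
      have hzero : (y - Y) * (y + Y) = 0 := by rw [hid, h]; ring
      rcases mul_eq_zero.mp hzero with h' | h'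
      · exact hw0 h'
      · exact hz0 h'
    obtain ⟨α, hα⟩ := getExp (y - Y) hw0
    obtain ⟨β, hβ⟩ := getExp (y + Y) hz0
    obtain ⟨r, hr⟩ := getExp X hXne
    have h3r : α + β = 3 * r := by
      apply coeInj
      have hX3 : (q.valuation L X) ^ (3 : ℕ)
          = ((Multiplicative.ofAdd (3 * r) : Multiplicative ℤ) : WithZero (Multiplicative ℤ)) := by
        rw [hr, ← WithZero.coe_pow]
        congr 1
      rw [ofAdd_add, WithZero.coe_mul, ← hα, ← hβ, ← Valuation.map_mul, hid,
        Valuation.map_neg, Valuation.map_pow, hX3]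
    have h2y : q.valuation L ((y - Y) + (y + Y))
        = ((Multiplicative.ofAdd s : Multiplicative ℤ) : WithZero (Multiplicative ℤ)) := by
      have : (y - Y) + (y + Y) = 2 * y := by ring
      rw [this, Valuation.map_mul, h2L, one_mul, hvys]
    rcases lt_trichotomy α β with hab | hab | hab
    · -- v (y-Y) < v (y+Y) : max is β
      have hlt : q.valuation L (y - Y) < q.valuation L (y + Y) := by
        rw [hα, hβ, WithZero.coe_lt_coe]
        exact hab
      have hβs : β = s := coeInj _ _ (by rw [← hβ, ← (q.valuation L).map_add_eq_of_lt_right hlt, h2y])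
      exact ⟨α, by omega, hα⟩
    · -- α = β
      exact ⟨α, by omega, hα⟩
    · have hlt : q.valuation L (y + Y) < q.valuation L (y - Y) := by
        rw [hα, hβ, WithZero.coe_lt_coe]
        exact hab
      have hαs : α = s := coeInj _ _ (by rw [← hα, ← (q.valuation L).map_add_eq_of_lt_left hlt, h2y])
      exact ⟨α, by omega, hα⟩
end

section
/- Let k be a number field and S a finite set of places containing the archimedean places. Suppose α ∈ k* generates a fractional O_{k,S}-ideal that is a p-th power: (α) = 𝔞^p. Then α = u · β^p · ∏_j β_j^{b_j} where u ∈ O_{k,S}^*, β ∈ k*, the β_j ∈ k* generate the p-th powers of ideal classes generating Cl(O_{k,S})[p], and b_j ∈ ℤ. In particular, α lies in the subgroup of k* generated by O_{k,S}^*, (k*)^p, and the β_j. -/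
set_option synthInstance.maxHeartbeats 1000000
set_option maxHeartbeats 1000000
set_option maxHeartbeats 2000000
open IsDedekindDomain NumberField

open scoped nonZeroDivisors

lemma aux_closure {G : Type*} [CommGroup G] {m : ℕ} (f : Fin m → G) {x : G}
    (hx : x ∈ Subgroup.closure (Set.range f)) : ∃ b : Fin m → ℤ, x = ∏ j, f j ^ b j := by
  induction hx using Subgroup.closure_induction with
  | mem y hy =>
      obtain ⟨j, rfl⟩ := hy
      refine ⟨fun i => if i = j then 1 else 0, ?_⟩
      rw [Finset.prod_eq_single j (fun i _ hi => by simp [hi]) (by simp)]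
      simp
  | one => exact ⟨0, by simp⟩
  | mul y z _ _ hy hz =>
      obtain ⟨b, rfl⟩ := hy; obtain ⟨c, rfl⟩ := hz
      exact ⟨b + c, by simp [zpow_add, Finset.prod_mul_distrib]⟩
  | inv y _ hy =>
      obtain ⟨b, rfl⟩ := hy
      exact ⟨-b, by simp [Finset.prod_inv_distrib]⟩

theorem stmt9 (p : ℕ) (hp : p.Prime)
    (k : Type*) [Field k] [NumberField k]
    (T : Set (HeightOneSpectrum (𝓞 k))) (hTfin : T.Finite)
    [IsFractionRing (T.integer k) k]
    (α : k) (hα : α ≠ 0)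
    (ha : ∃ a : FractionalIdeal (T.integer k)⁰ k,
      FractionalIdeal.spanSingleton (T.integer k)⁰ α = a ^ p)
    (m : ℕ) (B : Fin m → (FractionalIdeal (T.integer k)⁰ k)ˣ)
    (β : Fin m → kˣ)
    (hβ : ∀ j, (B j : FractionalIdeal (T.integer k)⁰ k) ^ p
      = FractionalIdeal.spanSingleton (T.integer k)⁰ (β j : k))
    (hBtor : ∀ j, (ClassGroup.mk k (B j)) ^ p = 1)
    (hBgen : ∀ c : ClassGroup (T.integer k), c ^ p = 1 →
      c ∈ Subgroup.closure (Set.range fun j => ClassGroup.mk k (B j))) :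
    ∃ (u : kˣ), u ∈ T.unit k ∧ ∃ (β' : kˣ) (b : Fin m → ℤ),
      α = ((u * β' ^ p * ∏ j, β j ^ b j : kˣ) : k) := by
  haveI : NoZeroSMulDivisors (T.integer k) k :=
    ⟨fun {c x} h => by
      rw [Algebra.smul_def, mul_eq_zero] at h
      exact h.imp_left fun h0 => (IsFractionRing.injective (T.integer k) k) (by rw [h0, map_zero])⟩
  obtain ⟨a, haeq⟩ := ha
  -- the principal fractional ideal of α as a unit
  set P : kˣ →* (FractionalIdeal (T.integer k)⁰ k)ˣ := toPrincipalIdeal (T.integer k) k with hP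
  have hPcoe : ∀ x : kˣ, (P x : FractionalIdeal (T.integer k)⁰ k)
      = FractionalIdeal.spanSingleton (T.integer k)⁰ (x : k) := fun x => coe_toPrincipalIdeal x
  set αu : (FractionalIdeal (T.integer k)⁰ k)ˣ := P (Units.mk0 α hα) with hαu
  -- a is a unit
  have hais : IsUnit a := by
    have : IsUnit (a ^ p) := by rw [← haeq]; exact ⟨αu, (hPcoe _)⟩
    exact (isUnit_pow_iff hp.ne_zero).mp this
  obtain ⟨A, hA⟩ := hais
  have hApow : A ^ p = αu := by
    ext
    rw [Units.val_pow_eq_pow_val, hA, ← haeq, hPcoe]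
    rfl
  -- mk A is p-torsion
  have hmk : (ClassGroup.mk k A : ClassGroup (T.integer k)) ^ p = 1 := by
    rw [← map_pow, hApow, hαu]
    exact ClassGroup.mk_eq_one_iff.mpr ⟨⟨α, by rw [hPcoe, FractionalIdeal.coe_spanSingleton]; rfl⟩⟩
  obtain ⟨b, hb⟩ := aux_closure (fun j => ClassGroup.mk k (B j)) (hBgen _ hmk)
  set W : (FractionalIdeal (T.integer k)⁰ k)ˣ := ∏ j, B j ^ b j with hW
  have hprin : ClassGroup.mk k (A * W⁻¹) = 1 := by
    rw [map_mul, map_inv, hW, map_prod]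
    simp only [map_zpow]
    rw [← hb, mul_inv_cancel]
  obtain ⟨γ, hγ⟩ := (FractionalIdeal.isPrincipal_iff _).mp (ClassGroup.mk_eq_one_iff.mp hprin)
  have hγ0 : γ ≠ 0 := by
    intro h
    have := hγ
    rw [h, FractionalIdeal.spanSingleton_zero] at this
    exact Units.ne_zero (A * W⁻¹) this
  set γu : kˣ := Units.mk0 γ hγ0 with hγu
  have hAW : A = P γu * W := by
    have : A * W⁻¹ = P γu := by
      refine Units.ext ?_
      rw [hPcoe]
      exact hγ
    rw [← this, inv_mul_cancel_right]
  -- B j ^ p = P (β j)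
  have hBP : ∀ j, (B j) ^ p = P (β j) := by
    intro j
    ext
    rw [Units.val_pow_eq_pow_val, hβ j, hPcoe]
  have hWp : W ^ p = P (∏ j, β j ^ b j) := by
    rw [hW, ← Finset.prod_pow, map_prod]
    refine Finset.prod_congr rfl fun j _ => ?_
    rw [← zpow_natCast (B j ^ b j) p, ← zpow_mul, mul_comm, zpow_mul, zpow_natCast, hBP j,
      map_zpow]
  have key : αu = P (γu ^ p * ∏ j, β j ^ b j) := by
    rw [← hApow, hAW, mul_pow, hWp, map_mul, map_pow]
  -- extract equality of elements
  have hspan : FractionalIdeal.spanSingleton (T.integer k)⁰ α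
      = FractionalIdeal.spanSingleton (T.integer k)⁰ ((γu ^ p * ∏ j, β j ^ b j : kˣ) : k) := by
    have := congrArg (Units.val) key
    rwa [hαu, hPcoe, hPcoe] at this
  obtain ⟨z, hz⟩ := FractionalIdeal.spanSingleton_eq_spanSingleton.mp hspan.symm
  refine ⟨((T.unitEquivUnitsInteger k).symm z : kˣ), Subtype.prop _, γu, b, ?_⟩
  have hcoe : ((((T.unitEquivUnitsInteger k).symm z : kˣ) : kˣ) : k) = ((z : T.integer k) : k) := rfl
  rw [Units.val_mul, Units.val_mul, hcoe, mul_assoc, ← Units.val_mul, ← hz,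
    Units.smul_def, Algebra.smul_def]
  rfl
end

section
/- Let C₃ be the smooth projective hyperelliptic curve over ℚ given by y² = t⁹ + 2973t⁶ − 369249t³ + 11764900, and let y₁(t) = t⁶ − 106t³ + 3430 and y₂(t) = (1/64)t⁶ + (269/4)t³ + 3430. Then the principal divisor div(y − y_i(t)) on C₃ is divisible by 3 in the divisor group, for i = 1, 2. -/
/-!
Write `f₃ = yᵢ² + gᵢ³` with `g₁ = -t (t³ - 71)` and `g₂ = -t (t³ + 1504) / 16`, so that
`(y - yᵢ) (y + yᵢ) = gᵢ³`. At a place where the two factors have equal valuation,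
`2 v (y - yᵢ) = 3 v gᵢ`. Otherwise `v y = v yᵢ`, because `v 2 = 0`. At a pole of `t` this is
impossible since `deg f₃ = 9 ≠ 12 = 2 deg yᵢ`; elsewhere it forces `v yᵢ = 0`, since `v yᵢ > 0`
would give `v gᵢ = 0` by coprimality and then `v f₃ = 0 < 2 v yᵢ`. So one factor is a unit and
the other has valuation `3 v gᵢ`.
-/

open Polynomial

namespace AddValuation

section Field

variable {K : Type*} [Field K] (v : AddValuation K (WithTop ℤ))

lemma exists_eq_coe {x : K} (hx : x ≠ 0) : ∃ n : ℤ, v x = n :=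
  WithTop.ne_top_iff_exists.mp ((v.ne_top_iff).mpr hx) |>.imp fun _ h => h.symm

theorem exists_val_sub_eq_three_mul {y q g : K} (hy : y ^ 2 = q ^ 2 + g ^ 3) (hg : g ≠ 0)
    (h2 : v 2 = 0) (hq : v y = v q → v q = 0) :
    ∃ n : ℤ, v (y - q) = ((3 * n : ℤ) : WithTop ℤ) := by
  have hcube : (y - q) * (y + q) = g ^ 3 := by linear_combination hy
  have hprod : y - q ≠ 0 ∧ y + q ≠ 0 := mul_ne_zero_iff.mp (hcube ▸ pow_ne_zero 3 hg)
  obtain ⟨α, hα⟩ := v.exists_eq_coe hprod.1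
  obtain ⟨β, hβ⟩ := v.exists_eq_coe hprod.2
  obtain ⟨γ, hγ⟩ := v.exists_eq_coe hg
  have hsum : α + β = 3 * γ := by
    have h := congrArg v hcube
    rw [v.map_mul, v.map_pow, hα, hβ, hγ, ← WithTop.coe_add, ← WithTop.coe_nsmul] at h
    exact_mod_cast h
  rw [hα]
  by_cases hαβ : α = β
  · exact ⟨α - γ, by rw [WithTop.coe_inj]; omega⟩
  have hne : v (y - q) ≠ v (y + q) := by rwa [hα, hβ, ne_eq, WithTop.coe_inj]
  have hvy : v y = min α β := by
    have h := v.map_add_of_distinct_val hne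
    rwa [show y - q + (y + q) = 2 * y by ring, v.map_mul, h2, zero_add, hα, hβ] at h
  have hvq : v q = min α β := by
    have h := v.map_add_of_distinct_val (x := y + q) (y := -(y - q))
      (by rw [v.map_neg]; exact hne.symm)
    rwa [show y + q + -(y - q) = 2 * q by ring, v.map_neg, v.map_mul, h2, zero_add, hα, hβ,
      min_comm] at h
  have hmin : min α β = 0 := by exact_mod_cast hvq ▸ hq (hvy.trans hvq.symm)
  rcases min_eq_iff.mp hmin with ⟨hα0, -⟩ | ⟨hβ0, -⟩
  · exact ⟨0, by rw [hα0]; rfl⟩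
  · exact ⟨γ, by rw [WithTop.coe_inj]; omega⟩

end Field

end AddValuation

section RatFunc

variable {K : Type*} [Field K] {w : AddValuation (RatFunc K) (WithTop ℤ)}

lemma AddValuation.isTrivialOn_toValuation (hw : ∀ c : K, c ≠ 0 → w (RatFunc.C c) = 0) :
    (AddValuation.toValuation w).IsTrivialOn K :=
  ⟨fun c hc => by rw [AddValuation.toValuation_apply, RatFunc.algebraMap_eq_C, hw c hc]; rfl⟩

/- The next two lemmas are Mathlib's statements for multiplicative valuations: under
`toValuation` the order is reversed and `^` becomes `•`, definitionally. -/
lemma val_algebraMap_eq_natDegree_nsmul (hw : ∀ c : K, c ≠ 0 → w (RatFunc.C c) = 0)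
    (hX : w RatFunc.X < 0) {p : K[X]} (hp : p ≠ 0) :
    w (algebraMap K[X] (RatFunc K) p) = p.natDegree • w RatFunc.X :=
  have := w.isTrivialOn_toValuation hw
  valuation_eq_valuation_X_pow_natDegree_of_one_lt_valuation_X K
    (v := AddValuation.toValuation w) hX hp

lemma val_algebraMap_nonneg (hw : ∀ c : K, c ≠ 0 → w (RatFunc.C c) = 0)
    (hX : 0 ≤ w RatFunc.X) (p : K[X]) :
    0 ≤ w (algebraMap K[X] (RatFunc K) p) :=
  have := w.isTrivialOn_toValuation hw
  valuation_le_one_of_valuation_X_le_one K (v := AddValuation.toValuation w) hX p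

lemma val_algebraMap_eq_zero_of_isCoprime (hw : ∀ c : K, c ≠ 0 → w (RatFunc.C c) = 0)
    (hX : 0 ≤ w RatFunc.X) {p r : K[X]} (hpr : IsCoprime p r)
    (hp : 0 < w (algebraMap K[X] (RatFunc K) p)) :
    w (algebraMap K[X] (RatFunc K) r) = 0 := by
  obtain ⟨a, b, hab⟩ := hpr
  refine (val_algebraMap_nonneg hw hX r).antisymm' (not_lt.mp fun hr => ?_)
  have h := congrArg (fun s => w (algebraMap K[X] (RatFunc K) s)) hab
  simp only [map_add, map_mul, map_one, w.map_one] at h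
  refine h.not_gt (w.map_lt_add ?_ ?_) <;> rw [w.map_mul]
  · exact hp.trans_le (le_add_of_nonneg_left (val_algebraMap_nonneg hw hX a))
  · exact hr.trans_le (le_add_of_nonneg_left (val_algebraMap_nonneg hw hX b))

theorem val_algebraMap_eq_zero_of_val_eq_val_sq (hw : ∀ c : K, c ≠ 0 → w (RatFunc.C c) = 0)
    {f q g : K[X]} (hf : f = q ^ 2 + g ^ 3) (hdeg : f.natDegree ≠ 2 * q.natDegree)
    (hqg : IsCoprime q g)
    (h : w (algebraMap K[X] (RatFunc K) f) = w (algebraMap K[X] (RatFunc K) (q ^ 2))) :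
    w (algebraMap K[X] (RatFunc K) q) = 0 := by
  have hq : q ≠ 0 := by
    rintro rfl
    have hf0 : f = 0 := by simpa using h
    simp [hf0] at hdeg
  have hf0 : f ≠ 0 := by
    rintro rfl
    have hq2 : algebraMap K[X] (RatFunc K) (q ^ 2) = 0 :=
      w.top_iff.mp (by rw [← h, map_zero, w.map_zero])
    exact hq (by simpa using hq2)
  rcases lt_or_ge (w RatFunc.X) 0 with hX | hX
  · obtain ⟨a, ha⟩ := w.exists_eq_coe RatFunc.X_ne_zero
    rw [val_algebraMap_eq_natDegree_nsmul hw hX hf0,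
      val_algebraMap_eq_natDegree_nsmul hw hX (pow_ne_zero 2 hq), natDegree_pow, ha,
      ← WithTop.coe_nsmul, ← WithTop.coe_nsmul, WithTop.coe_inj] at h
    rw [ha] at hX
    rw [nsmul_eq_mul, nsmul_eq_mul] at h
    exact absurd (by exact_mod_cast mul_right_cancel₀ (by exact_mod_cast hX.ne) h) hdeg
  · refine (val_algebraMap_nonneg hw hX q).antisymm' (not_lt.mp fun hqpos => ?_)
    have hsq : 0 < w (algebraMap K[X] (RatFunc K) (q ^ 2)) := by
      rw [map_pow, w.map_pow]
      exact nsmul_pos hqpos two_ne_zero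
    have hcube : w (algebraMap K[X] (RatFunc K) (g ^ 3)) = 0 := by
      rw [map_pow, w.map_pow, val_algebraMap_eq_zero_of_isCoprime hw hX hqg hqpos, nsmul_zero]
    have hf' := w.map_add_eq_of_lt_left (hcube ▸ hsq)
    rw [← map_add, add_comm, ← hf, hcube] at hf'
    rw [hf'] at h
    exact hsq.ne h

end RatFunc

theorem exists_val_sub_algebraMap_eq_three_mul {K F : Type*} [Field K] [Field F]
    [Algebra (RatFunc K) F] (v : AddValuation F (WithTop ℤ))
    (hv : ∀ c : K, c ≠ 0 → v (algebraMap (RatFunc K) F (RatFunc.C c)) = 0) (h2 : (2 : K) ≠ 0)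
    {y : F} {f q g : K[X]}
    (hy : y ^ 2 = algebraMap (RatFunc K) F (algebraMap K[X] (RatFunc K) f))
    (hf : f = q ^ 2 + g ^ 3) (hdeg : f.natDegree ≠ 2 * q.natDegree) (hqg : IsCoprime q g) :
    ∃ n : ℤ, v (y - algebraMap (RatFunc K) F (algebraMap K[X] (RatFunc K) q))
      = ((3 * n : ℤ) : WithTop ℤ) := by
  set ι := (algebraMap (RatFunc K) F).comp (algebraMap K[X] (RatFunc K))
  have hg : g ≠ 0 := by
    rintro rfl
    simp [hf, natDegree_pow] at hdeg
  refine v.exists_val_sub_eq_three_mul (g := ι g) ?_ ?_ ?_ fun hyq => ?_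
  · simp [ι, hy, hf]
  · simpa [ι] using hg
  · rw [← map_ofNat (algebraMap (RatFunc K) F) 2, ← map_ofNat RatFunc.C 2]
    exact hv 2 h2
  · refine val_algebraMap_eq_zero_of_val_eq_val_sq (w := v.comap (algebraMap (RatFunc K) F))
      hv hf hdeg hqg ?_
    change v y = v (ι q) at hyq
    change v (ι f) = v (ι (q ^ 2))
    rw [map_pow, v.map_pow, ← hyq, ← v.map_pow, hy]
    rfl

namespace C₃

noncomputable def f : ℚ[X] := X ^ 9 + 2973 * X ^ 6 - 369249 * X ^ 3 + 11764900

noncomputable def y₁ : ℚ[X] := X ^ 6 - 106 * X ^ 3 + 3430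

noncomputable def g₁ : ℚ[X] := -(X * (X ^ 3 - 71))

noncomputable def y₂ : ℚ[X] := C (1 / 64) * X ^ 6 + C (269 / 4) * X ^ 3 + 3430

noncomputable def g₂ : ℚ[X] := -(C (1 / 16) * X * (X ^ 3 + 1504))

lemma f_eq_y₁_sq_add_g₁_cube : f = y₁ ^ 2 + g₁ ^ 3 := by
  simp only [f, y₁, g₁]
  ring

lemma f_eq_y₂_sq_add_g₂_cube : f = y₂ ^ 2 + g₂ ^ 3 := by
  apply Polynomial.funext
  intro r
  simp [f, y₂, g₂]
  ring

lemma natDegree_f : f.natDegree = 9 := by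
  unfold f; compute_degree!

lemma natDegree_y₁ : y₁.natDegree = 6 := by
  unfold y₁; compute_degree!

lemma natDegree_y₂ : y₂.natDegree = 6 := by
  unfold y₂; compute_degree!

lemma isCoprime_y₁_g₁ : IsCoprime y₁ g₁ := by
  refine ⟨C (1 / 3430) + C (1 / 92610) * X ^ 3,
    -(C (4 / 46305) * X ^ 2) + C (1 / 92610) * X ^ 5, ?_⟩
  apply Polynomial.funext
  intro r
  simp [y₁, g₁]
  ring

lemma isCoprime_y₂_g₂ : IsCoprime y₂ g₂ := by
  refine ⟨C (1 / 3430) + C (1 / 4889808) * X ^ 3,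
    C (2641 / 12224520) * X ^ 2 + C (1 / 19559232) * X ^ 5, ?_⟩
  apply Polynomial.funext
  intro r
  simp [y₂, g₂]
  ring

lemma algebraMap_f : algebraMap ℚ[X] (RatFunc ℚ) f
    = RatFunc.X ^ 9 + 2973 * RatFunc.X ^ 6 - 369249 * RatFunc.X ^ 3 + 11764900 := by
  simp [f, map_ofNat]

lemma algebraMap_y₁ :
    algebraMap ℚ[X] (RatFunc ℚ) y₁ = RatFunc.X ^ 6 - 106 * RatFunc.X ^ 3 + 3430 := by
  simp [y₁, map_ofNat]

lemma algebraMap_y₂ : algebraMap ℚ[X] (RatFunc ℚ) y₂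
    = (1 / 64) * RatFunc.X ^ 6 + (269 / 4) * RatFunc.X ^ 3 + 3430 := by
  simp [y₂, map_ofNat]

end C₃

open C₃ in
theorem stmt14_general (F : Type*) [Field F] [Algebra (RatFunc ℚ) F]
    (y : F)
    (hy : y ^ 2 = algebraMap (RatFunc ℚ) F
      (RatFunc.X ^ 9 + 2973 * RatFunc.X ^ 6 - 369249 * RatFunc.X ^ 3 + 11764900))
    (v : AddValuation F (WithTop ℤ))
    (htriv : ∀ c : ℚ, c ≠ 0 → v (algebraMap (RatFunc ℚ) F (RatFunc.C c)) = 0) :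
    (∃ n : ℤ, v (y - algebraMap (RatFunc ℚ) F
        (RatFunc.X ^ 6 - 106 * RatFunc.X ^ 3 + 3430)) = ((3 * n : ℤ) : WithTop ℤ)) ∧
    (∃ n : ℤ, v (y - algebraMap (RatFunc ℚ) F
        ((1 / 64) * RatFunc.X ^ 6 + (269 / 4) * RatFunc.X ^ 3 + 3430))
      = ((3 * n : ℤ) : WithTop ℤ)) := by
  rw [← algebraMap_f] at hy
  rw [← algebraMap_y₁, ← algebraMap_y₂]
  exact ⟨exists_val_sub_algebraMap_eq_three_mul v htriv two_ne_zero hy f_eq_y₁_sq_add_g₁_cube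
      (by simp [natDegree_f, natDegree_y₁]) isCoprime_y₁_g₁,
    exists_val_sub_algebraMap_eq_three_mul v htriv two_ne_zero hy f_eq_y₂_sq_add_g₂_cube
      (by simp [natDegree_f, natDegree_y₂]) isCoprime_y₂_g₂⟩

theorem stmt14 (F : Type*) [Field F] [Algebra (RatFunc ℚ) F]
    (y : F)
    (hy : y ^ 2 = algebraMap (RatFunc ℚ) F
      (RatFunc.X ^ 9 + 2973 * RatFunc.X ^ 6 - 369249 * RatFunc.X ^ 3 + 11764900))
    (hgen : Algebra.adjoin (RatFunc ℚ) {y} = ⊤)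
    (v : AddValuation F (WithTop ℤ))
    (hsurj : Function.Surjective v)
    (htriv : ∀ c : ℚ, c ≠ 0 → v (algebraMap (RatFunc ℚ) F (RatFunc.C c)) = 0) :
    (∃ n : ℤ, v (y - algebraMap (RatFunc ℚ) F
        (RatFunc.X ^ 6 - 106 * RatFunc.X ^ 3 + 3430)) = ((3 * n : ℤ) : WithTop ℤ)) ∧
    (∃ n : ℤ, v (y - algebraMap (RatFunc ℚ) F
        ((1 / 64) * RatFunc.X ^ 6 + (269 / 4) * RatFunc.X ^ 3 + 3430))
      = ((3 * n : ℤ) : WithTop ℤ)) :=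
  stmt14_general F y hy v htriv
end

section
/- With x₁ = (1−u³)/(4u) + t, x₂ = (1−u³)/(4u) − t, x₃ = −(u³+3)/(4u) + t, x₄ = (u⁶−6u³−3)/(4(u⁴−u)) − t, x₅ = (u⁹−u⁶+15u³+1)/(4(u⁷−u)) + t, and x₆ = −(x₁+⋯+x₅), the coefficient a₃ of X³ in ∏_{i=1}^{6}(X − x_i) equals −1, as elements of ℚ(t, u). -/
/-!
Since `x₆ = -(x₁ + ⋯ + x₅)`, the power sum `p₁` vanishes and Newton's identity reduces to
`3 e₃ = p₃`, so `a₃ = -e₃ = -p₃ / 3`. It remains to check the rational-function identity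
`x₁³ + ⋯ + x₆³ = 3`, which holds identically in `t` as soon as the denominators `4u`,
`4(u⁴ - u)`, `4(u⁷ - u)` are nonzero; in `ℚ(t, u)` this is because `u` is transcendental over `ℚ`.
-/

open Polynomial

theorem coeff_three_prod_six_X_sub_C {R : Type*} [CommRing R] (a b c d e f : R) :
    ((X - C a) * (X - C b) * (X - C c) * (X - C d) * (X - C e) * (X - C f) : R[X]).coeff 3
      = -({a, b, c, d, e, f} : Multiset R).esymm 3 := by
  have vieta := Multiset.prod_X_sub_C_coeff ({a, b, c, d, e, f} : Multiset R) (k := 3) (by simp)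
  simp only [Multiset.insert_eq_cons, Multiset.map_cons, Multiset.prod_cons,
    Multiset.map_singleton, Multiset.prod_singleton, Multiset.card_cons,
    Multiset.card_singleton] at vieta
  simp only [mul_assoc, vieta]
  norm_num

theorem three_mul_esymm_three_six_of_sum_eq_zero {R : Type*} [CommRing R] (a b c d e f : R)
    (h : a + b + c + d + e + f = 0) :
    3 * ({a, b, c, d, e, f} : Multiset R).esymm 3 = a ^ 3 + b ^ 3 + c ^ 3 + d ^ 3 + e ^ 3 + f ^ 3 := by
  simp only [Multiset.esymm, Multiset.insert_eq_cons, Multiset.powersetCard_cons, Nat.reduceAdd,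
    Multiset.card_cons, Multiset.card_singleton, Nat.lt_add_one, Multiset.powersetCard_eq_empty,
    Order.lt_two_iff, Std.le_refl, Multiset.powersetCard_one, Multiset.map_singleton,
    zero_add, Multiset.powersetCard_zero_left, Multiset.cons_zero,
    Multiset.singleton_add, Multiset.map_cons, Multiset.add_cons, Multiset.cons_add,
    Multiset.prod_cons, Multiset.prod_singleton, Multiset.sum_cons, Multiset.sum_singleton]
  -- `p₃ - 3 e₃ = p₁ (p₂ - e₂)`
  linear_combination -(a ^ 2 + b ^ 2 + c ^ 2 + d ^ 2 + e ^ 2 + f ^ 2 - a * b - a * c - a * d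
    - a * e - a * f - b * c - b * d - b * e - b * f - c * d - c * e - c * f - d * e - d * f
    - e * f) * h

theorem mestre_sum_cubes_eq_three {K : Type*} [Field K] (h2 : (2 : K) ≠ 0) {u : K} (hu : u ≠ 0)
    (hu6 : u ^ 6 ≠ 1) (t : K) {x₁ x₂ x₃ x₄ x₅ x₆ : K}
    (h₁ : x₁ = (1 - u ^ 3) / (4 * u) + t)
    (h₂ : x₂ = (1 - u ^ 3) / (4 * u) - t)
    (h₃ : x₃ = -((u ^ 3 + 3) / (4 * u)) + t)
    (h₄ : x₄ = (u ^ 6 - 6 * u ^ 3 - 3) / (4 * (u ^ 4 - u)) - t)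
    (h₅ : x₅ = (u ^ 9 - u ^ 6 + 15 * u ^ 3 + 1) / (4 * (u ^ 7 - u)) + t)
    (h₆ : x₆ = -(x₁ + x₂ + x₃ + x₄ + x₅)) :
    x₁ ^ 3 + x₂ ^ 3 + x₃ ^ 3 + x₄ ^ 3 + x₅ ^ 3 + x₆ ^ 3 = 3 := by
  have h4 : (4 : K) ≠ 0 := by
    rw [show (4 : K) = 2 * 2 by norm_num]
    exact mul_ne_zero h2 h2
  have hu3 : u ^ 3 - 1 ≠ 0 := fun h => hu6 (by linear_combination (u ^ 3 + 1) * h)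
  have hu6' : u ^ 6 - 1 ≠ 0 := sub_ne_zero.mpr hu6
  rw [show u ^ 4 - u = u * (u ^ 3 - 1) by ring] at h₄
  rw [show u ^ 7 - u = u * (u ^ 6 - 1) by ring] at h₅
  subst h₆ h₁ h₂ h₃ h₄ h₅
  field_simp
  ring

theorem RatFunc.X_pow_ne_one {K : Type*} [Field K] {n : ℕ} (hn : n ≠ 0) :
    (RatFunc.X : RatFunc K) ^ n ≠ 1 := fun h =>
  RatFunc.transcendental_X (IsAlgebraic.of_pow (Nat.pos_of_ne_zero hn) (h ▸ isAlgebraic_one))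

theorem stmt16 :
    ∀ u t x₁ x₂ x₃ x₄ x₅ x₆ : RatFunc (RatFunc ℚ),
      u = RatFunc.C (RatFunc.X : RatFunc ℚ) → t = RatFunc.X →
      x₁ = (1 - u ^ 3) / (4 * u) + t →
      x₂ = (1 - u ^ 3) / (4 * u) - t →
      x₃ = -((u ^ 3 + 3) / (4 * u)) + t →
      x₄ = (u ^ 6 - 6 * u ^ 3 - 3) / (4 * (u ^ 4 - u)) - t →
      x₅ = (u ^ 9 - u ^ 6 + 15 * u ^ 3 + 1) / (4 * (u ^ 7 - u)) + t →
      x₆ = -(x₁ + x₂ + x₃ + x₄ + x₅) →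
      ((X - C x₁) * (X - C x₂) * (X - C x₃) * (X - C x₄) * (X - C x₅) * (X - C x₆)
        : Polynomial (RatFunc (RatFunc ℚ))).coeff 3 = -1 := by
  intro u t x₁ x₂ x₃ x₄ x₅ x₆ hu _ h₁ h₂ h₃ h₄ h₅ h₆
  have hu0 : u ≠ 0 := hu ▸ (_root_.map_ne_zero _).mpr RatFunc.X_ne_zero
  have hu6 : u ^ 6 ≠ 1 := by
    rw [hu, ← map_pow, ← map_one RatFunc.C, RatFunc.C_injective.ne_iff]
    exact RatFunc.X_pow_ne_one (by norm_num)
  have hsum : x₁ + x₂ + x₃ + x₄ + x₅ + x₆ = 0 := by rw [h₆]; ring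
  have he₃ : ({x₁, x₂, x₃, x₄, x₅, x₆} : Multiset _).esymm 3 = 1 := by
    apply mul_left_cancel₀ (three_ne_zero (α := RatFunc (RatFunc ℚ)))
    rw [three_mul_esymm_three_six_of_sum_eq_zero _ _ _ _ _ _ hsum,
      mestre_sum_cubes_eq_three two_ne_zero hu0 hu6 t h₁ h₂ h₃ h₄ h₅ h₆, mul_one]
  rw [coeff_three_prod_six_X_sub_C, he₃]
end
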